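/- Let X'₁,…,X'_n be i.i.d. uniform on [0,1], and let X₁ ≤ … ≤ X_n be their order statistics. Then for any 1 ≤ k < l ≤ n and h > 0 and any u > 0: P[X_l - X_k > h] ≤ n · exp(-nh(1 - e^{-u}) + u(l-k)). -/

import Mathlib

open MeasureTheory ProbabilityTheory
open scoped ENNReal ProbabilityTheory

open Finset

/-!
If `X l - X k > h`, the window `(X k, X k + h]` lies in `[0, 1]` and contains at most `l - k - 1`
sample points, and `X k` is one of the `n` original points `X' i`. Since `X' i` is independent of
the other coordinates, conditionally on `X' i = x` the number of them in `(x, x + h]` is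
Binomial(`n - 1`, `h`), whose lower tail the Chernoff bound controls by
`exp (u m) (1 - h (1 - e^{-u}))^(n - 1) ≤ exp (u m - (n - 1) h (1 - e^{-u}))`.
A union bound over `i` gives the factor `n`.
-/

def sparseWindows (ι : Type*) [Fintype ι] (h : ℝ) (m : ℕ) : Set (ℝ × (ι → ℝ)) :=
  {q | 0 ≤ q.1 ∧ q.1 + h ≤ 1 ∧ #{j | q.2 j ∈ Set.Ioc q.1 (q.1 + h)} ≤ m}

section SparseWindows

variable {ι : Type*} [Fintype ι] {h : ℝ} {m : ℕ}

lemma measurableSet_sparseWindows : MeasurableSet (sparseWindows ι h m) := by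
  have hcount : Measurable fun q : ℝ × (ι → ℝ) => #{j | q.2 j ∈ Set.Ioc q.1 (q.1 + h)} := by
    simp_rw [card_filter]
    refine Finset.measurable_sum _ fun j _ => Measurable.ite ?_ measurable_const measurable_const
    have hj : Measurable fun q : ℝ × (ι → ℝ) => q.2 j := (measurable_pi_apply j).comp measurable_snd
    exact (measurableSet_lt measurable_fst hj).inter
      (measurableSet_le hj (measurable_fst.add_const h))
  exact (measurableSet_le measurable_const measurable_fst).inter
    ((measurableSet_le (measurable_fst.add_const h) measurable_const).inter
      (measurableSet_le hcount measurable_const))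

lemma sparseWindows_eq_empty (h1 : 1 < h) : sparseWindows ι h m = ∅ :=
  Set.eq_empty_of_forall_notMem fun _ hq => by linarith [hq.1, hq.2.1]

lemma mk_comp_mem_sparseWindows {κ : Type*} [Fintype κ] {g : κ → ι} (hg : g.Injective)
    {a : ℝ} {y : ι → ℝ} (hq : (a, y) ∈ sparseWindows ι h m) : (a, y ∘ g) ∈ sparseWindows κ h m :=
  ⟨hq.1, hq.2.1, le_trans (card_le_card_of_injOn g (fun j hj => by simpa using hj) hg.injOn) hq.2.2⟩

/-- The points of `x` in `(y k, y k + h]` are the `y r` with `k < r < l`. -/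
lemma card_filter_mem_Ioc_le_card_Ioo [LinearOrder ι] [LocallyFiniteOrder ι] {x y : ι → ℝ}
    (hy : Monotone y) {σ : Equiv.Perm ι} (hσ : ∀ i, y i = x (σ i)) {k l : ι}
    (hgap : h < y l - y k) : #{j | x j ∈ Set.Ioc (y k) (y k + h)} ≤ #(Ioo k l) := by
  refine card_le_card_of_injOn σ.symm (fun j hj => ?_) σ.symm.injective.injOn
  have hj' : y (σ.symm j) ∈ Set.Ioc (y k) (y k + h) := by simpa [hσ] using hj
  simp only [coe_Ioo, Set.mem_Ioo]
  constructor
  · exact lt_of_not_ge fun hle => (hy hle).not_gt hj'.1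
  · exact lt_of_not_ge fun hle => (hy hle).not_gt (by linarith [hj'.2])

end SparseWindows

section Probability

variable {Ω : Type*} [MeasurableSpace Ω] {μ : Measure Ω}

lemma ProbabilityTheory.IndepFun.measure_preimage_prodMk_eq_lintegral {β γ : Type*}
    [MeasurableSpace β] [MeasurableSpace γ] [IsFiniteMeasure μ] {Z : Ω → β} {Y : Ω → γ}
    (hZY : IndepFun Z Y μ) (hZ : Measurable Z) (hY : Measurable Y) {S : Set (β × γ)}
    (hS : MeasurableSet S) :
    μ ((fun ω => (Z ω, Y ω)) ⁻¹' S) = ∫⁻ x, μ ((fun ω => (x, Y ω)) ⁻¹' S) ∂μ.map Z := by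
  rw [← Measure.map_apply (hZ.prodMk hY) hS,
    hZY.map_prod_eq_prod_map_map hZ.aemeasurable hY.aemeasurable, Measure.prod_apply hS]
  refine lintegral_congr fun x => ?_
  rw [Measure.map_apply hY (measurable_prodMk_left hS)]
  rfl

lemma mgf_indicator_one_comp [IsProbabilityMeasure μ] {β : Type*} [MeasurableSpace β]
    {X : Ω → β} (hX : Measurable X) {A : Set β} (hA : MeasurableSet A) (t : ℝ) :
    mgf (fun ω => A.indicator 1 (X ω)) μ t = 1 + μ.real (X ⁻¹' A) * (Real.exp t - 1) := by
  have hexp : (fun ω => Real.exp (t * A.indicator 1 (X ω))) =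
      fun ω => (X ⁻¹' A).indicator (fun _ => Real.exp t - 1) ω + 1 := by
    funext ω
    by_cases hω : X ω ∈ A <;> simp [Set.indicator_of_mem, Set.indicator_of_notMem, hω]
  rw [mgf, hexp, integral_add ((integrable_const _).indicator (hX hA)) (integrable_const _),
    integral_indicator_const _ (hX hA)]
  simp [add_comm]

lemma measure_card_filter_mem_le_le_exp [IsProbabilityMeasure μ] {ι β : Type*} [Fintype ι]
    [MeasurableSpace β] {X : ι → Ω → β} (hX : ∀ i, Measurable (X i)) (hindep : iIndepFun X μ)
    {A : Set β} [DecidablePred (· ∈ A)] (hA : MeasurableSet A) {p : ℝ}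
    (hp : ∀ i, μ.real (X i ⁻¹' A) = p) (m : ℕ) {u : ℝ} (hu : 0 ≤ u) :
    μ {ω | #{i | X i ω ∈ A} ≤ m} ≤
      ENNReal.ofReal (Real.exp (u * m - Fintype.card ι * p * (1 - Real.exp (-u)))) := by
  set B : ι → Ω → ℝ := fun i ω => A.indicator 1 (X i ω)
  have hB : ∀ i, Measurable (B i) := fun i => (measurable_const.indicator hA).comp (hX i)
  have hBindep : iIndepFun B μ :=
    hindep.comp (fun _ => A.indicator 1) fun _ => measurable_const.indicator hA
  have hsum : ∀ ω, (∑ i, B i) ω = #{i | X i ω ∈ A} := fun ω => by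
    rw [Finset.sum_apply, natCast_card_filter]
    simp [B, Set.indicator_apply]
  have hint : Integrable (fun ω => Real.exp (-u * (∑ i, B i) ω)) μ := by
    refine Integrable.of_bound (by fun_prop) 1 (ae_of_all _ fun ω => ?_)
    rw [Real.norm_of_nonneg (Real.exp_nonneg _), Real.exp_le_one_iff, hsum]
    nlinarith [(Nat.cast_nonneg _ : (0 : ℝ) ≤ #{i | X i ω ∈ A})]
  have hmgf : ∀ i, mgf (B i) μ (-u) ≤ Real.exp (-(p * (1 - Real.exp (-u)))) := fun i => by
    rw [mgf_indicator_one_comp (hX i) hA, hp]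
    linarith [Real.add_one_le_exp (-(p * (1 - Real.exp (-u))))]
  rw [← ofReal_measureReal]
  simp_rw [← Nat.cast_le (α := ℝ), ← hsum]
  refine ENNReal.ofReal_le_ofReal ?_
  calc μ.real {ω | (∑ i, B i) ω ≤ m}
      ≤ Real.exp (-(-u) * m) * mgf (∑ i, B i) μ (-u) :=
        measure_le_le_exp_mul_mgf _ (neg_nonpos.2 hu) hint
    _ = Real.exp (u * m) * ∏ i, mgf (B i) μ (-u) := by rw [hBindep.mgf_sum hB, neg_neg]
    _ ≤ Real.exp (u * m) * ∏ _i : ι, Real.exp (-(p * (1 - Real.exp (-u)))) := by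
        gcongr with i
        · exact fun i _ => mgf_nonneg
        · exact hmgf i
    _ = _ := by
        rw [prod_const, ← Real.exp_nat_mul, ← Real.exp_add, card_univ]
        ring_nf

variable {ι : Type*} [Fintype ι]

lemma measureReal_preimage_Ioc_of_map_eq_uniform {Y : Ω → ℝ} (hY : Measurable Y)
    (hunif : μ.map Y = volume.restrict (Set.Icc (0 : ℝ) 1)) {x h : ℝ} (hx0 : 0 ≤ x)
    (hx1 : x + h ≤ 1) (hh : 0 ≤ h) : μ.real (Y ⁻¹' Set.Ioc x (x + h)) = h := by
  rw [measureReal_def, ← Measure.map_apply hY measurableSet_Ioc, hunif,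
    Measure.restrict_apply measurableSet_Ioc,
    Set.inter_eq_left.2 (Set.Ioc_subset_Icc_self.trans (Set.Icc_subset_Icc hx0 hx1)),
    Real.volume_Ioc, add_sub_cancel_left, ENNReal.toReal_ofReal hh]

lemma measure_mk_mem_sparseWindows_le [IsProbabilityMeasure μ] {Y : ι → Ω → ℝ}
    (hY : ∀ j, Measurable (Y j)) (hindep : iIndepFun Y μ)
    (hunif : ∀ j, μ.map (Y j) = volume.restrict (Set.Icc (0 : ℝ) 1)) (x : ℝ) {h : ℝ}
    (hh : 0 ≤ h) (m : ℕ) {u : ℝ} (hu : 0 ≤ u) :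
    μ {ω | (x, fun j => Y j ω) ∈ sparseWindows ι h m} ≤
      ENNReal.ofReal (Real.exp (u * m - Fintype.card ι * h * (1 - Real.exp (-u)))) := by
  by_cases hx : 0 ≤ x ∧ x + h ≤ 1
  · exact (measure_mono fun ω hω => hω.2.2).trans <| measure_card_filter_mem_le_le_exp hY hindep
      measurableSet_Ioc
      (fun j => measureReal_preimage_Ioc_of_map_eq_uniform (hY j) (hunif j) hx.1 hx.2 hh) m hu
  · have hempty : {ω | (x, fun j => Y j ω) ∈ sparseWindows ι h m} = ∅ :=
      Set.eq_empty_of_forall_notMem fun ω hω => hx ⟨hω.1, hω.2.1⟩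
    simp [hempty]

/-- The point `X i` is independent of the other coordinates, which, conditionally on `X i = x`,
fall into `(x, x + h]` independently with probability `h` each. -/
lemma measure_mem_sparseWindows_le [DecidableEq ι] [IsProbabilityMeasure μ] {X : ι → Ω → ℝ}
    (hX : ∀ i, Measurable (X i)) (hindep : iIndepFun X μ)
    (hunif : ∀ i, μ.map (X i) = volume.restrict (Set.Icc (0 : ℝ) 1)) (i : ι) {h : ℝ}
    (hh : 0 ≤ h) (m : ℕ) {u : ℝ} (hu : 0 ≤ u) :
    μ {ω | (X i ω, fun j => X j ω) ∈ sparseWindows ι h m} ≤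
      ENNReal.ofReal (Real.exp (u * (m + 1) - Fintype.card ι * h * (1 - Real.exp (-u)))) := by
  rcases lt_or_ge 1 h with h1 | h1
  · simp [sparseWindows_eq_empty h1]
  set T := univ.erase i
  set Y : Ω → T → ℝ := fun ω j => X j ω
  have hY : Measurable Y := measurable_pi_lambda _ fun j => hX j
  have hZY : IndepFun (X i) Y μ :=
    (hindep.indepFun_finset {i} T (disjoint_singleton_left.2 (notMem_erase i univ)) hX).comp
      (measurable_pi_apply (⟨i, mem_singleton_self i⟩ : ({i} : Finset ι))) measurable_id
  set B := Real.exp (u * m - Fintype.card T * h * (1 - Real.exp (-u)))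
  have hcard : (Fintype.card T : ℝ) = Fintype.card ι - 1 := by
    rw [Fintype.card_coe, card_erase_of_mem (mem_univ i), card_univ,
      Nat.cast_sub (Fintype.card_pos_iff.2 ⟨i⟩), Nat.cast_one]
  -- `h (1 - e^{-u}) ≤ u` trades the missing `n`-th Binomial factor for the extra `e^u`.
  have hB : B ≤ Real.exp (u * (m + 1) - Fintype.card ι * h * (1 - Real.exp (-u))) := by
    have hc : 1 - Real.exp (-u) ≤ u := by linarith [Real.add_one_le_exp (-u)]
    have hc0 : 0 ≤ 1 - Real.exp (-u) := sub_nonneg.2 (Real.exp_le_one_iff.2 (neg_nonpos.2 hu))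
    rw [Real.exp_le_exp, hcard]
    nlinarith
  calc μ {ω | (X i ω, fun j => X j ω) ∈ sparseWindows ι h m}
      ≤ μ ((fun ω => (X i ω, Y ω)) ⁻¹' sparseWindows T h m) :=
        measure_mono fun ω hω => mk_comp_mem_sparseWindows Subtype.val_injective hω
    _ = ∫⁻ x, μ ((fun ω => (x, Y ω)) ⁻¹' sparseWindows T h m) ∂μ.map (X i) :=
        hZY.measure_preimage_prodMk_eq_lintegral (hX i) hY measurableSet_sparseWindows
    _ ≤ ∫⁻ _, ENNReal.ofReal B ∂μ.map (X i) :=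
        lintegral_mono fun x => measure_mk_mem_sparseWindows_le (fun j : T => hX j)
          (hindep.precomp Subtype.val_injective) (fun j => hunif j) x hh m hu
    _ ≤ _ := by
        rw [lintegral_const, Measure.map_apply (hX i) MeasurableSet.univ, Set.preimage_univ,
          measure_univ, mul_one]
        exact ENNReal.ofReal_le_ofReal hB

end Probability

/-- For order statistics `X₁ ≤ … ≤ X_n` of an i.i.d. uniform sample on `[0,1]`,
for `1 ≤ k < l ≤ n`, `h > 0`, `u > 0`:
`P[X_l - X_k > h] ≤ n exp(-nh(1 - e^{-u}) + u(l - k))`. -/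
theorem order_statistics_gap_tail
    {Ω : Type*} [MeasureSpace Ω] [IsProbabilityMeasure (ℙ : Measure Ω)]
    (n : ℕ) (X' X : Fin n → Ω → ℝ)
    (hmeas : ∀ i, Measurable (X' i))
    (hindep : iIndepFun X' ℙ)
    (hunif : ∀ i, Measure.map (X' i) ℙ = volume.restrict (Set.Icc (0 : ℝ) 1))
    (hmono : ∀ ω, Monotone fun i => X i ω)
    (hperm : ∀ ω, ∃ π : Equiv.Perm (Fin n), ∀ i, X i ω = X' (π i) ω)
    (k l : Fin n) (hkl : k < l) (h u : ℝ) (hh : 0 < h) (hu : 0 < u) :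
    ℙ {ω | h < X l ω - X k ω}
      ≤ ENNReal.ofReal ((n : ℝ) *
          Real.exp (-(n : ℝ) * h * (1 - Real.exp (-u)) + u * (((l : ℕ) : ℝ) - ((k : ℕ) : ℝ)))) := by
  set m := (l : ℕ) - k - 1
  set W := fun i => {ω | (X' i ω, fun j => X' j ω) ∈ sparseWindows (Fin n) h m}
  have hunit : ∀ᵐ ω ∂ℙ, ∀ j, X' j ω ∈ Set.Icc (0 : ℝ) 1 := ae_all_iff.2 fun j =>
    ae_of_ae_map (hmeas j).aemeasurable (by rw [hunif j]; exact ae_restrict_mem measurableSet_Icc)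
  have hcover : {ω | h < X l ω - X k ω} ≤ᵐ[ℙ] ⋃ i, W i := by
    filter_upwards [hunit] with ω hω (hgap : h < X l ω - X k ω)
    obtain ⟨σ, hσ⟩ := hperm ω
    refine Set.mem_iUnion.2 ⟨σ k, ?_, ?_, ?_⟩
    · exact hσ k ▸ (hω _).1
    · linarith [hσ k, hσ l, (hω (σ l)).2]
    · simpa [← hσ k] using card_filter_mem_Ioc_le_card_Ioo (hmono ω) hσ hgap
  have hm : (m : ℝ) + 1 = (l : ℕ) - (k : ℕ) := by
    have hkl' : (k : ℕ) < l := hkl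
    rw [← Nat.cast_add_one, show m + 1 = (l : ℕ) - k by omega, Nat.cast_sub hkl'.le]
  calc ℙ {ω | h < X l ω - X k ω}
      ≤ ∑ i, ℙ (W i) := (measure_mono_ae hcover).trans (measure_iUnion_fintype_le _ _)
    _ ≤ ∑ _i : Fin n, ENNReal.ofReal (Real.exp (u * (m + 1) - n * h * (1 - Real.exp (-u)))) :=
        sum_le_sum fun i _ => by
          simpa using measure_mem_sparseWindows_le hmeas hindep hunif i hh.le m hu.le
    _ = _ := by
        rw [sum_const, card_univ, Fintype.card_fin, nsmul_eq_mul, ← ENNReal.ofReal_natCast,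
          ← ENNReal.ofReal_mul (Nat.cast_nonneg n), hm]
        ring_nf
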